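/- arXiv:2511.11841 — 3 statements merged into one kernel-verified Lean document; each statement's English description precedes it below -/
import Mathlib

section
/- Let L/K be a finite extension of a perfect field K inside a fixed algebraic closure K̄, with Galois closure L̃, G = Gal(L̃/K) and H = Gal(L̃/L). If H is not contained in any proper normal subgroup of G, then L/K is primitive. In particular, if G is a simple group, then L/K is primitive. -/
open IntermediateField Module

section Defs

variable (K Kbar : Type*) [Field K] [Field Kbar] [Algebra K Kbar]

/-- The Galois closure inside the ambient field `Kbar` of an intermediate field `L` of
`Kbar / K`: the compositum of all the `K`-conjugates of `L` in `Kbar`. -/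
noncomputable def galClosure (L : IntermediateField K Kbar) : IntermediateField K Kbar :=
  ⨆ f : ↥L →ₐ[K] Kbar, f.fieldRange

/-- The subgroup `H = Gal(L̃/L)` of `G = Gal(L̃/K)`. -/
noncomputable def fixSub (L : IntermediateField K Kbar) :
    Subgroup (↥(galClosure K Kbar L) ≃ₐ[K] ↥(galClosure K Kbar L)) :=
  (IntermediateField.comap (galClosure K Kbar L).val L).fixingSubgroup

/-- The cluster size `r_K(L) = [N_G(H) : H]`. -/
noncomputable def clusterSize (L : IntermediateField K Kbar) : ℕ :=
  (fixSub K Kbar L).relIndex (Subgroup.normalizer (fixSub K Kbar L : Set (↥(galClosure K Kbar L) ≃ₐ[K] ↥(galClosure K Kbar L))))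

/-- The number of clusters `s_K(L) = [G : N_G(H)]`. -/
noncomputable def numClusters (L : IntermediateField K Kbar) : ℕ :=
  (Subgroup.normalizer (fixSub K Kbar L : Set (↥(galClosure K Kbar L) ≃ₐ[K] ↥(galClosure K Kbar L)))).index

/-- The ascending index `t_K(L) = [G : H^G]`. -/
noncomputable def ascIndex (L : IntermediateField K Kbar) : ℕ :=
  (Subgroup.normalClosure (fixSub K Kbar L :
      Set (↥(galClosure K Kbar L) ≃ₐ[K] ↥(galClosure K Kbar L)))).index

/-- The quantity `u_K(L) = [H^G : H]`. -/
noncomputable def uIndex (L : IntermediateField K Kbar) : ℕ :=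
  (fixSub K Kbar L).relIndex (Subgroup.normalClosure (fixSub K Kbar L :
      Set (↥(galClosure K Kbar L) ≃ₐ[K] ↥(galClosure K Kbar L))))

/-- `M/K` is obtained by strong cluster magnification from `L/K` through `F/K`. -/
def IsSCMvia (M L F : IntermediateField K Kbar) : Prop :=
  L ≤ M ∧ 2 < Module.finrank K ↥L ∧ FiniteDimensional K ↥F ∧ IsGalois K ↥F ∧
    galClosure K Kbar L ⊓ F = ⊥ ∧ L ⊔ F = M

/-- `M/K` is primitive: it is not obtained by a nontrivial strong cluster magnification
from any subextension over `K`. -/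
def IsPrimitive (M : IntermediateField K Kbar) : Prop :=
  ¬ ∃ L F : IntermediateField K Kbar, IsSCMvia K Kbar M L F ∧ F ≠ ⊥

/-- `M/K` is obtained by strong general magnification from `L/K` through `J/K`. -/
def IsSGMvia (M L J : IntermediateField K Kbar) : Prop :=
  L ≤ M ∧ 1 < Module.finrank K ↥L ∧ FiniteDimensional K ↥J ∧
    galClosure K Kbar L ⊓ galClosure K Kbar J = ⊥ ∧ L ⊔ J = M

/-- `M/K` is general primitive: not obtained by a nontrivial strong general magnification
from any subextension over `K`. -/
def IsGeneralPrimitive (M : IntermediateField K Kbar) : Prop :=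
  ¬ ∃ L J : IntermediateField K Kbar, IsSGMvia K Kbar M L J ∧ J ≠ ⊥

/-- `F/E` is a Galois pair of intermediate fields: `E ≤ F` and `F/E` is Galois. -/
def IsGaloisPair (E F : IntermediateField K Kbar) : Prop :=
  ∃ h : E ≤ F, IsGalois ↥E ↥(IntermediateField.extendScalars h)

/-- One step of the unique descending chain: `N'` is an intermediate field of `N/K` such
that `N/N'` is Galois of maximal possible degree. -/
def DescStep (N N' : IntermediateField K Kbar) : Prop :=
  N' ≤ N ∧ IsGaloisPair K Kbar N' N ∧
    ∀ N'' : IntermediateField K Kbar, N'' ≤ N → IsGaloisPair K Kbar N'' N →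
      Module.finrank K ↥N' ≤ Module.finrank K ↥N''

/-- One step of the unique ascending chain for `L/K`: `F'` is an intermediate field of
`L/F` such that `F'/F` is Galois of maximal possible degree. -/
def AscStep (L F F' : IntermediateField K Kbar) : Prop :=
  F ≤ F' ∧ F' ≤ L ∧ IsGaloisPair K Kbar F F' ∧
    ∀ F'' : IntermediateField K Kbar, F ≤ F'' → F'' ≤ L → IsGaloisPair K Kbar F F'' →
      Module.finrank K ↥F'' ≤ Module.finrank K ↥F'

/-- `E` occurs in the unique descending chain of `L/K`. -/
def InDescChain (L E : IntermediateField K Kbar) : Prop :=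
  Relation.ReflTransGen (DescStep K Kbar) L E

/-- `E` occurs in the unique ascending chain of `L/K`. -/
def InAscChain (L E : IntermediateField K Kbar) : Prop :=
  Relation.ReflTransGen (AscStep K Kbar L) ⊥ E

end Defs

/-!
If `M = L F` with `F/K` Galois and `F ≠ K`, then `N = Gal(M̃/F)` is a normal subgroup of
`G = Gal(M̃/K)` containing `H = Gal(M̃/M)`, and it is proper because `F ≠ K`. It is also
nontrivial: otherwise `M̃ ⊆ F`, so `L ⊆ L̃ ∩ F = K`, contradicting `[L:K] > 2`. Hence such an `N`
violates either hypothesis on `G`.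
-/

namespace IntermediateField

section GaloisCorrespondence

variable {K E : Type*} [Field K] [Field E] [Algebra K E] [FiniteDimensional K E] [IsGalois K E]

theorem fixingSubgroup_eq_top_iff {X : IntermediateField K E} : X.fixingSubgroup = ⊤ ↔ X = ⊥ :=
  ⟨fun h => by rw [← IsGalois.fixedField_fixingSubgroup X, h, IsGalois.fixedField_top],
    fun h => h ▸ fixingSubgroup_bot⟩

theorem fixingSubgroup_eq_bot_iff {X : IntermediateField K E} : X.fixingSubgroup = ⊥ ↔ X = ⊤ :=
  ⟨fun h => by rw [← IsGalois.fixedField_fixingSubgroup X, h, fixedField_bot],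
    fun h => h ▸ fixingSubgroup_top⟩

end GaloisCorrespondence

section ComapVal

variable {K Ω : Type*} [Field K] [Field Ω] [Algebra K Ω] {E F : IntermediateField K Ω}

theorem lift_comap_val (hFE : F ≤ E) : lift (comap E.val F) = F :=
  map_comap_eq_self (by rwa [fieldRange_val])

theorem comap_val_eq_bot_iff (hFE : F ≤ E) : comap E.val F = ⊥ ↔ F = ⊥ := by
  rw [← lift_inj, lift_comap_val hFE, lift_bot]

theorem comap_val_eq_top_iff (hFE : F ≤ E) : comap E.val F = ⊤ ↔ F = E := by
  rw [← lift_inj, lift_comap_val hFE, lift_top]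

theorem isGalois_comap_val [IsGalois K F] (hFE : F ≤ E) : IsGalois K (comap E.val F) :=
  .of_algEquiv <| (equivOfEq (lift_comap_val hFE)).symm.trans (equivMap _ E.val).symm

end ComapVal

end IntermediateField

section GaloisClosure

variable {K Kbar : Type*} [Field K] [Field Kbar] [Algebra K Kbar]

theorem le_galClosure (M : IntermediateField K Kbar) : M ≤ galClosure K Kbar M :=
  le_normalClosure M

instance (M : IntermediateField K Kbar) [FiniteDimensional K M] :
    FiniteDimensional K (galClosure K Kbar M) :=
  normalClosure.is_finiteDimensional K M Kbar

instance [PerfectField K] [IsAlgClosure K Kbar] (M : IntermediateField K Kbar) :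
    IsGalois K (galClosure K Kbar M) :=
  IsGalois.normalClosure K M Kbar

theorem fixSub_le_fixingSubgroup_comap {M F : IntermediateField K Kbar} (hFM : F ≤ M) :
    fixSub K Kbar M ≤ (comap (galClosure K Kbar M).val F).fixingSubgroup :=
  fixingSubgroup_le fun _ hx => hFM hx

end GaloisClosure

namespace IsSCMvia

variable {K Kbar : Type*} [Field K] [Field Kbar] [Algebra K Kbar] {M L F : IntermediateField K Kbar}

theorem galois_le (h : IsSCMvia K Kbar M L F) : F ≤ M :=
  h.2.2.2.2.2 ▸ le_sup_right

theorem not_galClosure_le (h : IsSCMvia K Kbar M L F) : ¬ galClosure K Kbar M ≤ F := by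
  obtain ⟨hLM, hrank, -, -, hinf, -⟩ := h
  intro hMF
  have hL : L = ⊥ := by
    rw [eq_bot_iff, ← hinf]
    exact le_inf (le_galClosure L) (hLM.trans ((le_galClosure M).trans hMF))
  rw [hL, IntermediateField.finrank_bot] at hrank
  omega

theorem exists_normal_fixSub_le [PerfectField K] [IsAlgClosure K Kbar] [FiniteDimensional K M]
    (h : IsSCMvia K Kbar M L F) (hF : F ≠ ⊥) :
    ∃ N : Subgroup (galClosure K Kbar M ≃ₐ[K] galClosure K Kbar M),
      N.Normal ∧ fixSub K Kbar M ≤ N ∧ N ≠ ⊤ ∧ N ≠ ⊥ := by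
  have hFE : F ≤ galClosure K Kbar M := h.galois_le.trans (le_galClosure M)
  have : IsGalois K F := h.2.2.2.1
  have : IsGalois K (comap (galClosure K Kbar M).val F) := isGalois_comap_val hFE
  refine ⟨_, inferInstance, fixSub_le_fixingSubgroup_comap h.galois_le, ?_, ?_⟩
  · rwa [Ne, fixingSubgroup_eq_top_iff, comap_val_eq_bot_iff hFE]
  · rw [Ne, fixingSubgroup_eq_bot_iff, comap_val_eq_top_iff hFE]
    exact fun hEF => h.not_galClosure_le hEF.ge

end IsSCMvia

/-- Let `L/K` be a finite extension of a perfect field `K` inside a fixed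
algebraic closure `Kbar`, with Galois closure `L̃`, `G = Gal(L̃/K)` and `H = Gal(L̃/L)`.
If `H` is not contained in any proper normal subgroup of `G`, then `L/K` is primitive.
In particular, if `G` is a simple group, then `L/K` is primitive. -/
theorem primitive_of_fixSub_not_le_proper_normal
    (K Kbar : Type*) [Field K] [PerfectField K] [Field Kbar] [Algebra K Kbar]
    [IsAlgClosure K Kbar]
    (L : IntermediateField K Kbar) [FiniteDimensional K ↥L] :
    ((∀ N : Subgroup (↥(galClosure K Kbar L) ≃ₐ[K] ↥(galClosure K Kbar L)),
        N.Normal → fixSub K Kbar L ≤ N → N = ⊤) →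
      IsPrimitive K Kbar L) ∧
    (IsSimpleGroup (↥(galClosure K Kbar L) ≃ₐ[K] ↥(galClosure K Kbar L)) →
      IsPrimitive K Kbar L) := by
  constructor
  · rintro hH ⟨L', F, hscm, hF⟩
    obtain ⟨N, hN, hHN, hNtop, -⟩ := hscm.exists_normal_fixSub_le hF
    exact hNtop (hH N hN hHN)
  · rintro hG ⟨L', F, hscm, hF⟩
    obtain ⟨N, hN, -, hNtop, hNbot⟩ := hscm.exists_normal_fixSub_le hF
    exact hN.eq_bot_or_eq_top.elim hNbot hNtop
end

section
/- Let L/K be a nontrivial finite extension of a perfect field K inside a fixed algebraic closure K̄. Suppose one of the fields in the unique descending chain of L/K which is different from both L and K coincides with one of the fields in the unique ascending chain of L/K, i.e. N_i = F_j for some i, j with N_i ≠ L and N_i ≠ K. Then L/K is primitive. -/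
open IntermediateField Module

/-!
If `L = L₀F` with `F/K` Galois and `L̃₀ ∩ F = K`, then `L/L₀` is Galois. Inside the Galois
extension `Kbar/K`, the fields `A ≤ L` with `L/A` Galois are exactly those containing the fixed
field of the stabilizer of `L`; this stabilizer contains the open subgroup fixing `L`, so it is
closed and infinite Galois theory applies. Hence the first step `N₁` of the descending chain is
that fixed field, and `N₁ ≤ L₀`. On the other side, every nontrivial field of the ascending chain
contains each Galois subextension of `L/K`, by maximality of its last step. So
`F ≤ E ≤ N₁ ≤ L₀ ≤ L̃₀`, and `L̃₀ ∩ F = K` forces `F = K`.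
-/

namespace IntermediateField

open scoped Pointwise

variable {K Ω : Type*} [Field K] [Field Ω] [Algebra K Ω]

theorem finiteDimensional_of_le {N L : IntermediateField K Ω} [FiniteDimensional K L]
    (h : N ≤ L) : FiniteDimensional K N :=
  Module.Finite.of_injective (inclusion h).toLinearMap (inclusion h).injective

theorem mem_stabilizer_iff_map_eq {X : IntermediateField K Ω} {σ : Gal(Ω/K)} :
    σ ∈ MulAction.stabilizer Gal(Ω/K) (X : Set Ω) ↔ X.map (σ : Ω →ₐ[K] Ω) = X := by
  rw [MulAction.mem_stabilizer_iff, ← SetLike.coe_set_eq (p := X.map _), coe_map]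
  rfl

theorem stabilizer_inf_le_stabilizer_sup (X Y : IntermediateField K Ω) :
    MulAction.stabilizer Gal(Ω/K) (X : Set Ω) ⊓ MulAction.stabilizer Gal(Ω/K) (Y : Set Ω) ≤
      MulAction.stabilizer Gal(Ω/K) ((X ⊔ Y : IntermediateField K Ω) : Set Ω) := by
  intro σ hσ
  rw [Subgroup.mem_inf, mem_stabilizer_iff_map_eq, mem_stabilizer_iff_map_eq] at hσ
  rw [mem_stabilizer_iff_map_eq, map_sup, hσ.1, hσ.2]

theorem map_extendScalars_eq_iff {A X : IntermediateField K Ω} (h : A ≤ X) (σ : Gal(Ω/A)) :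
    (extendScalars h).map (σ : Ω →ₐ[A] Ω) = extendScalars h ↔
      X.map ((σ.restrictScalars K : Gal(Ω/K)) : Ω →ₐ[K] Ω) = X := by
  rw [← SetLike.coe_set_eq, ← SetLike.coe_set_eq (p := X.map _)]
  rfl

theorem isClosed_stabilizer (L : IntermediateField K Ω) [FiniteDimensional K L] :
    IsClosed (MulAction.stabilizer Gal(Ω/K) (L : Set Ω) : Set Gal(Ω/K)) :=
  Subgroup.isClosed_of_isOpen _ <|
    Subgroup.isOpen_mono (MulAction.fixingSubgroup_le_stabilizer _ _) L.fixingSubgroup_isOpen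

/-- For finite `L/K` inside a Galois extension, the smallest field below `L` over which `L` is
Galois. -/
def galoisBase (L : IntermediateField K Ω) : IntermediateField K Ω :=
  fixedField (MulAction.stabilizer Gal(Ω/K) (L : Set Ω))

variable [IsGalois K Ω]

theorem isGaloisPair_iff {A X : IntermediateField K Ω} (h : A ≤ X) :
    IsGaloisPair K Ω A X ↔ A.fixingSubgroup ≤ MulAction.stabilizer Gal(Ω/K) (X : Set Ω) := by
  have : IsGalois A Ω := IsGalois.tower_top_of_isGalois K A Ω
  have : Algebra.IsSeparable A (extendScalars h) :=
    Algebra.isSeparable_tower_bot_of_isSeparable A (extendScalars h) Ω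
  calc IsGaloisPair K Ω A X ↔ Normal A (extendScalars h) :=
        ⟨fun ⟨_, hgal⟩ => hgal.to_normal, fun _ => ⟨h, { }⟩⟩
    _ ↔ ∀ σ : Gal(Ω/A), X.map ((σ.restrictScalars K : Gal(Ω/K)) : Ω →ₐ[K] Ω) = X := by
        simp only [normal_iff_forall_map_eq', map_extendScalars_eq_iff]
    _ ↔ ∀ τ ∈ A.fixingSubgroup, X.map (τ : Ω →ₐ[K] Ω) = X :=
        ⟨fun hX τ hτ => hX (fixingSubgroupEquiv A ⟨τ, hτ⟩),
          fun hX σ => hX _ ((mem_fixingSubgroup_iff A _).mpr fun x hx => σ.commutes ⟨x, hx⟩)⟩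
    _ ↔ _ := by simp only [SetLike.le_def, mem_stabilizer_iff_map_eq]

theorem isGaloisPair_refl (A : IntermediateField K Ω) : IsGaloisPair K Ω A A :=
  (isGaloisPair_iff le_rfl).mpr (MulAction.fixingSubgroup_le_stabilizer _ _)

theorem IsGaloisPair.sup_of_isGalois {A X F : IntermediateField K Ω} (hAX : IsGaloisPair K Ω A X)
    (hF : IsGalois K F) : IsGaloisPair K Ω A (X ⊔ F) := by
  have hle := hAX.1
  rw [isGaloisPair_iff hle] at hAX
  refine (isGaloisPair_iff (hle.trans le_sup_left)).mpr fun σ hσ => ?_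
  refine stabilizer_inf_le_stabilizer_sup X F ⟨hAX hσ, ?_⟩
  exact mem_stabilizer_iff_map_eq.mpr (normal_iff_forall_map_eq'.mp hF.to_normal σ)

variable (L : IntermediateField K Ω) [FiniteDimensional K L]

theorem fixingSubgroup_galoisBase :
    (galoisBase L).fixingSubgroup = MulAction.stabilizer Gal(Ω/K) (L : Set Ω) :=
  InfiniteGalois.fixingSubgroup_fixedField ⟨_, isClosed_stabilizer L⟩

theorem galoisBase_le_iff {A : IntermediateField K Ω} :
    galoisBase L ≤ A ↔ A.fixingSubgroup ≤ MulAction.stabilizer Gal(Ω/K) (L : Set Ω) := by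
  refine ⟨fun h => fixingSubgroup_galoisBase L ▸ fixingSubgroup_le h, fun h => ?_⟩
  rw [← InfiniteGalois.fixedField_fixingSubgroup A]
  exact fixedField_le h

theorem galoisBase_le : galoisBase L ≤ L :=
  (galoisBase_le_iff L).mpr (MulAction.fixingSubgroup_le_stabilizer _ _)

theorem galoisBase_le_of_isGaloisPair {A : IntermediateField K Ω} (h : IsGaloisPair K Ω A L) :
    galoisBase L ≤ A :=
  (galoisBase_le_iff L).mpr ((isGaloisPair_iff h.1).mp h)

theorem isGaloisPair_galoisBase : IsGaloisPair K Ω (galoisBase L) L :=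
  (isGaloisPair_iff (galoisBase_le L)).mpr (fixingSubgroup_galoisBase L).le

end IntermediateField

section Chains

open IntermediateField

variable {K Ω : Type*} [Field K] [Field Ω] [Algebra K Ω]

theorem InDescChain.le {N E : IntermediateField K Ω} (h : InDescChain K Ω N E) : E ≤ N := by
  induction h with
  | refl => exact le_rfl
  | tail _ step ih => exact step.1.trans ih

variable [IsGalois K Ω] {L : IntermediateField K Ω} [FiniteDimensional K L]

theorem DescStep.eq_galoisBase {N : IntermediateField K Ω} (h : DescStep K Ω L N) :
    N = galoisBase L := by
  obtain ⟨hNL, hpair, hmax⟩ := h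
  have := finiteDimensional_of_le hNL
  exact (eq_of_le_of_finrank_le (galoisBase_le_of_isGaloisPair L hpair)
    (hmax _ (galoisBase_le L) (isGaloisPair_galoisBase L))).symm

theorem InDescChain.le_galoisBase {E : IntermediateField K Ω} (h : InDescChain K Ω L E)
    (hEL : E ≠ L) : E ≤ galoisBase L := by
  rcases Relation.ReflTransGen.cases_head h with rfl | ⟨N, hstep, hNE⟩
  · exact absurd rfl hEL
  · exact hstep.eq_galoisBase ▸ InDescChain.le hNE

theorem AscStep.le_of_isGalois {F B C : IntermediateField K Ω} (h : AscStep K Ω L B C)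
    (hFL : F ≤ L) (hF : IsGalois K F) : F ≤ C := by
  obtain ⟨hBC, hCL, hpair, hmax⟩ := h
  have := finiteDimensional_of_le (sup_le hCL hFL)
  have hCF : C = C ⊔ F := eq_of_le_of_finrank_le le_sup_left
    (hmax _ (hBC.trans le_sup_left) (sup_le hCL hFL) (hpair.sup_of_isGalois hF))
  exact hCF ▸ le_sup_right

theorem InAscChain.le_of_isGalois {F E : IntermediateField K Ω} (h : InAscChain K Ω L E)
    (hE : E ≠ ⊥) (hFL : F ≤ L) (hF : IsGalois K F) : F ≤ E := by
  rcases Relation.ReflTransGen.cases_tail h with rfl | ⟨B, -, hstep⟩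
  · exact absurd rfl hE
  · exact hstep.le_of_isGalois hFL hF

end Chains

theorem primitive_of_descChain_meets_ascChain_general
    (K Kbar : Type*) [Field K] [PerfectField K] [Field Kbar] [Algebra K Kbar]
    [IsAlgClosure K Kbar]
    (L : IntermediateField K Kbar) [FiniteDimensional K ↥L]
    (E : IntermediateField K Kbar)
    (hdesc : InDescChain K Kbar L E) (hasc : InAscChain K Kbar L E)
    (hEL : E ≠ L) (hEK : E ≠ ⊥) :
    IsPrimitive K Kbar L := by
  rintro ⟨L₀, F, ⟨-, -, -, hF, hdisj, rfl⟩, hFne⟩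
  have hFE : F ≤ E := hasc.le_of_isGalois hEK le_sup_right hF
  have hbase : galoisBase (L₀ ⊔ F) ≤ L₀ :=
    galoisBase_le_of_isGaloisPair _ ((isGaloisPair_refl L₀).sup_of_isGalois hF)
  have hFL₀ : F ≤ L₀ := hFE.trans <| (hdesc.le_galoisBase hEL).trans hbase
  exact hFne <| eq_bot_iff.mpr <|
    -- `galClosure K Kbar L₀` unfolds to `normalClosure K L₀ Kbar`
    hdisj ▸ le_inf (hFL₀.trans (le_normalClosure L₀)) le_rfl

/-- Let `L/K` be a nontrivial finite extension of a perfect field `K` inside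
a fixed algebraic closure. If some field `E` in the unique descending chain of `L/K`, different
from both `L` and `K`, coincides with one of the fields in the unique ascending chain of `L/K`,
then `L/K` is primitive. -/
theorem primitive_of_descChain_meets_ascChain
    (K Kbar : Type*) [Field K] [PerfectField K] [Field Kbar] [Algebra K Kbar]
    [IsAlgClosure K Kbar]
    (L : IntermediateField K Kbar) [FiniteDimensional K ↥L] (hL : L ≠ ⊥)
    (E : IntermediateField K Kbar)
    (hdesc : InDescChain K Kbar L E) (hasc : InAscChain K Kbar L E)
    (hEL : E ≠ L) (hEK : E ≠ ⊥) :
    IsPrimitive K Kbar L :=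
  primitive_of_descChain_meets_ascChain_general K Kbar L E hdesc hasc hEL hEK
end

section
/- Suppose M/K is obtained by strong general magnification from a subextension L/K through J/K (so [L:K] > 1, L̃ ∩ J̃ = K and LJ = M). If M/K is Galois, then L/K and J/K are both Galois, and moreover if [L:K] > 2 then M/K is obtained by strong cluster magnification from L/K through J/K. -/
/-!
Since `M/K` is normal, it contains the Galois closures `L̃` and `J̃`. As `L̃` is Galois and
`L̃ ∩ J = K`, the fields `L̃` and `J` are linearly disjoint, so
`[L̃ : K] [J : K] = [L̃ J : K] ≤ [L J : K] ≤ [L : K] [J : K]`. Hence `L = L̃` is Galois, and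
symmetrically `J = J̃`; then `L̃ ∩ J = L̃ ∩ J̃ = K` is exactly the strong cluster condition.
-/

open IntermediateField Module

namespace IntermediateField

variable {F E : Type*} [Field F] [Field E] [Algebra F E]

theorem eq_of_le_sup_of_inf_eq_bot {A B N : IntermediateField F E} [FiniteDimensional F N]
    [IsGalois F N] [FiniteDimensional F B] (hAN : A ≤ N) (hN : N ≤ A ⊔ B) (hNB : N ⊓ B = ⊥) :
    A = N := by
  have : FiniteDimensional F A :=
    .of_injective (inclusion hAN).toLinearMap (inclusion hAN).injective
  have hrank : finrank F N * finrank F B ≤ finrank F A * finrank F B :=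
    calc finrank F N * finrank F B = finrank F ↥(N ⊔ B) :=
          (LinearDisjoint.of_inf_eq_bot hNB).finrank_sup.symm
      _ ≤ finrank F ↥(A ⊔ B) := finrank_le_of_le_right (sup_le hN le_sup_right)
      _ ≤ finrank F A * finrank F B := finrank_sup_le A B
  exact eq_of_le_of_finrank_le hAN (Nat.le_of_mul_le_mul_right hrank finrank_pos)

theorem normalClosure_eq_self_of_sup_eq_of_inf_eq_bot [IsGalois F E]
    {A B M : IntermediateField F E} [FiniteDimensional F M] [Normal F M] (hAB : A ⊔ B = M)
    (hdisj : normalClosure F A E ⊓ normalClosure F B E = ⊥) : normalClosure F A E = A := by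
  have hA : normalClosure F A E ≤ M := normalClosure_le_iff_of_normal.mpr (hAB ▸ le_sup_left)
  have : FiniteDimensional F (normalClosure F A E) :=
    .of_injective (inclusion hA).toLinearMap (inclusion hA).injective
  have hB : B ≤ M := hAB ▸ le_sup_right
  have : FiniteDimensional F B := .of_injective (inclusion hB).toLinearMap (inclusion hB).injective
  refine (eq_of_le_sup_of_inf_eq_bot (le_normalClosure A) (hAB ▸ hA) ?_).symm
  exact le_bot_iff.mp (hdisj ▸ inf_le_inf_left _ (le_normalClosure B))

end IntermediateField

/-- Suppose `M/K` is obtained by strong general magnification from `L/K`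
through `J/K`.  If `M/K` is Galois, then `L/K` and `J/K` are both Galois, and moreover if
`[L:K] > 2` then `M/K` is obtained by strong cluster magnification from `L/K` through `J/K`. -/
theorem strong_general_magnification_galois_descends
    (K Kbar : Type*) [Field K] [PerfectField K] [Field Kbar] [Algebra K Kbar]
    [IsAlgClosure K Kbar]
    (M L J : IntermediateField K Kbar) [FiniteDimensional K ↥M]
    (h : IsSGMvia K Kbar M L J) (hM : IsGalois K ↥M) :
    IsGalois K ↥L ∧ IsGalois K ↥J ∧
      (2 < Module.finrank K ↥L → IsSCMvia K Kbar M L J) := by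
  -- `galClosure K Kbar L` is by definition `normalClosure K L Kbar`.
  obtain ⟨hLM, -, hJfin, hdisj, hsup⟩ := h
  have hL : normalClosure K L Kbar = L :=
    normalClosure_eq_self_of_sup_eq_of_inf_eq_bot hsup hdisj
  have hJ : normalClosure K J Kbar = J :=
    normalClosure_eq_self_of_sup_eq_of_inf_eq_bot (sup_comm L J ▸ hsup)
      (inf_comm (normalClosure K L Kbar) _ ▸ hdisj)
  have hLgal : IsGalois K L := hL ▸ inferInstance
  have hJgal : IsGalois K J := hJ ▸ inferInstance
  exact ⟨hLgal, hJgal, fun hL2 => ⟨hLM, hL2, hJfin, hJgal, hJ ▸ hdisj, hsup⟩⟩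
end
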